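/- arXiv:1702.00385 — 5 statements merged into one kernel-verified Lean document; each statement's English description precedes it below -/
import Mathlib

section
/- Quasi-commutation of distant Artin generators (part of Theorem 6.1): Let k ≥ 4, r ≥ 2, n = rk, and let i satisfy 3 ≤ i ≤ k−1. For every index j ∈ ZMod n there exist a sign ε_j ∈ {+1, −1} and a Laurent monomial M_j in the frozen minors (both independent of v) such that for every generic configuration v : ZMod n → (Fin k → ℂ), the j-th vector of σ_i(σ_1(v)) equals ε_j · M_j(v) · (the j-th vector of σ_1(σ_i(v))). In other words, σ_i ∘ σ_1 and σ_1 ∘ σ_i agree componentwise up to signs and Laurent monomials in the frozen minors. -/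
open scoped BigOperators

noncomputable section

/-- Determinant of the `k × k` matrix whose `b`-th column is `c b`. -/
def colDet {k : ℕ} (c : Fin k → Fin k → ℂ) : ℂ :=
  Matrix.det (Matrix.of fun a b => c b a)

/-- The frozen Plücker minor `Δ_m(v)`, on the `k` cyclically consecutive
columns starting at `m`. -/
def frozen (k n : ℕ) (v : ZMod n → Fin k → ℂ) (m : ZMod n) : ℂ :=
  colDet (fun b : Fin k => v (m + ((b : ℕ) : ZMod n)))

/-- A configuration is generic if all frozen minors are nonzero. -/
def Generic (k n : ℕ) (v : ZMod n → Fin k → ℂ) : Prop :=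
  ∀ m : ZMod n, frozen k n v m ≠ 0

/-- The Laurent monomial `∏_m Δ_m(v)^(e m)` in the frozen minors. -/
def laurent (k n : ℕ) (e : Fin n → ℤ) (v : ZMod n → Fin k → ℂ) : ℂ :=
  ∏ m : Fin n, frozen k n v ((m : ℕ) : ZMod n) ^ e m

/-- The Artin generator `σ_i` acting on configurations. -/
def artin (k n i : ℕ) (v : ZMod n → Fin k → ℂ) : ZMod n → Fin k → ℂ :=
  fun j =>
    if (ZMod.val j) % k = i % k then v (j + 1)
    else if (ZMod.val j) % k = (i + 1) % k then
      (colDet (fun b : Fin k =>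
          if (b : ℕ) = 0 then v (j - 1) else v (j + ((b : ℕ) : ZMod n)))) • v j
        - (frozen k n v j) • v (j - 1)
    else v j

/-- `artinComp k n i v = σ_i (σ_{i-1} (⋯ (σ_1 v)))`. -/
def artinComp (k n : ℕ) : ℕ → (ZMod n → Fin k → ℂ) → ZMod n → Fin k → ℂ
  | 0, v => v
  | m + 1, v => artin k n (m + 1) (artinComp k n m v)

/-- `artinCompRev k n i v = σ_1 (σ_2 (⋯ (σ_i v)))`. -/
def artinCompRev (k n : ℕ) : ℕ → (ZMod n → Fin k → ℂ) → ZMod n → Fin k → ℂ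
  | 0, v => v
  | m + 1, v => artinCompRev k n m (artin k n (m + 1) v)

/-- The degree-one Grassmann–Cayley meet
`(a_1 ⋯ a_p) ∩ (b_1 ⋯ b_q)` (intended for `p + q = k + 1`):
`Σ_{i=1}^{p} (−1)^{p−i} · det(a_1 | ⋯ | â_i | ⋯ | a_p | b_1 | ⋯ | b_q) · a_i`. -/
def gcMeet {k p q : ℕ} (a : Fin p → Fin k → ℂ) (b : Fin q → Fin k → ℂ) : Fin k → ℂ :=
  ∑ i : Fin p, ((-1 : ℂ) ^ (p - 1 - (i : ℕ)) *
    colDet (fun c : Fin k =>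
      if hc : (c : ℕ) < p - 1 then
        (if hci : (c : ℕ) < (i : ℕ) then a ⟨(c : ℕ), Nat.lt_trans hci i.isLt⟩
         else a ⟨(c : ℕ) + 1, by have := i.isLt; omega⟩)
      else if hq : (c : ℕ) - (p - 1) < q then b ⟨(c : ℕ) - (p - 1), hq⟩ else 0)) • a i

/-!
The generator `σ_a` only changes the vectors at positions `≡ a, a + 1 (mod k)`. For distant `a`
and `c` these classes are disjoint, so `σ_a` and `σ_c` commute at every position except those
`j ≡ a + 1` (or symmetrically `j ≡ c + 1`), where `σ_a` replaces `v_j` by a combination of `v_j`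
and `v_{j-1}` whose coefficients are minors on the window `j - 1, j, …, j + k - 1`. That window
contains the two positions `p - 1, p ≡ c, c + 1` moved by `σ_c`, on which `σ_c` shifts `v_p` one
step left and puts `B v_p - Δ_p v_{p-1}` at `p`; by multilinearity and alternation this multiplies
each of those minors by `Δ_p`.
-/

theorem AlternatingMap.map_update_update_sub_smul {R M N ι : Type*} [CommRing R]
    [AddCommGroup M] [Module R M] [AddCommGroup N] [Module R N] [DecidableEq ι]
    (f : M [⋀^ι]→ₗ[R] N) (v : ι → M) {i j : ι} (hij : i ≠ j) (B D : R) :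
    f (Function.update (Function.update v i (v j)) j (B • v j - D • v i)) = D • f v := by
  have hswap : Function.update (Function.update v i (v j)) j (v i) = v ∘ Equiv.swap i j := by
    rw [Equiv.comp_swap_eq_update, Function.update_comm hij.symm]
  rw [f.map_update_sub, f.map_update_smul, f.map_update_smul, f.map_update_update v hij,
    hswap, f.map_swap v hij, smul_zero, zero_sub, smul_neg, neg_neg]

theorem colDet_eq_mul_of_exchange {k : ℕ} {c c' : Fin k → Fin k → ℂ} {t t' : Fin k}
    (htt' : t ≠ t') (B D : ℂ) (h_t : c' t = c t') (h_t' : c' t' = B • c t' - D • c t)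
    (h_rest : ∀ b, b ≠ t → b ≠ t' → c' b = c b) :
    colDet c' = D * colDet c := by
  have hc' : c' = Function.update (Function.update c t (c t')) t' (B • c t' - D • c t) := by
    funext b
    by_cases hb' : b = t'
    · subst hb'; rw [Function.update_self, h_t']
    by_cases hb : b = t
    · subst hb; rw [Function.update_of_ne hb', Function.update_self, h_t]
    · rw [Function.update_of_ne hb', Function.update_of_ne hb, h_rest b hb hb']
  have hdet (c : Fin k → Fin k → ℂ) : colDet c = Matrix.detRowAlternating c := by
    rw [colDet, ← Matrix.det_transpose]; rfl
  rw [hdet, hdet, hc', AlternatingMap.map_update_update_sub_smul _ _ htt', smul_eq_mul]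

/-- The vector `σ_a` puts at a position `j ≡ a + 1`: the meet of the line `v_{j-1} v_j` with the
hyperplane `v_{j+1} ⋯ v_{j+k-1}`. -/
def mutation (k n : ℕ) (v : ZMod n → Fin k → ℂ) (j : ZMod n) : Fin k → ℂ :=
  colDet (fun b : Fin k => if (b : ℕ) = 0 then v (j - 1) else v (j + ((b : ℕ) : ZMod n))) • v j
    - frozen k n v j • v (j - 1)

theorem mutation_eq_frozen_smul_of_exchange {k n : ℕ} {v w : ZMod n → Fin k → ℂ} {j : ZMod n}
    {s : ℕ} (hs : 2 ≤ s) (hsk : s < k) (h_prev : w (j - 1) = v (j - 1))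
    (h_shift : w (j + ((s - 1 : ℕ) : ZMod n)) = v (j + s))
    (h_mut : w (j + s) = mutation k n v (j + s))
    (h_rest : ∀ b < k, b ≠ s - 1 → b ≠ s → w (j + b) = v (j + b)) :
    mutation k n w j = frozen k n v (j + s) • mutation k n v j := by
  have hpred : j + s - 1 = j + ((s - 1 : ℕ) : ZMod n) := by
    rw [Nat.cast_sub (by omega : 1 ≤ s)]; push_cast; ring
  have hj : w j = v j := by simpa using h_rest 0 (by omega) (by omega) (by omega)
  have hcol (x : Fin k → ℂ) :
      colDet (fun b : Fin k => if (b : ℕ) = 0 then x else w (j + ((b : ℕ) : ZMod n)))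
        = frozen k n v (j + s) *
          colDet (fun b : Fin k => if (b : ℕ) = 0 then x else v (j + ((b : ℕ) : ZMod n))) := by
    refine colDet_eq_mul_of_exchange (t := ⟨s - 1, by omega⟩) (t' := ⟨s, hsk⟩)
      (by simp only [ne_eq, Fin.mk.injEq]; omega) (colDet fun b : Fin k =>
        if (b : ℕ) = 0 then v (j + s - 1) else v (j + s + ((b : ℕ) : ZMod n))) _ ?_ ?_ ?_
    · simp only [show s - 1 ≠ 0 by omega, show s ≠ 0 by omega, if_false, h_shift]
    · simp only [show s - 1 ≠ 0 by omega, show s ≠ 0 by omega, if_false, h_mut, mutation, hpred]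
    · intro b hb hb'
      split_ifs
      · rfl
      · exact h_rest b b.isLt (fun h => hb (Fin.ext h)) (fun h => hb' (Fin.ext h))
  have hfrozen (u : ZMod n → Fin k → ℂ) : frozen k n u j
      = colDet (fun b : Fin k => if (b : ℕ) = 0 then u j else u (j + ((b : ℕ) : ZMod n))) := by
    unfold frozen; congr 1; funext b; split_ifs with hb <;> simp [hb]
  rw [mutation, mutation, hfrozen, hfrozen, hcol, hcol, hj, h_prev, smul_sub, smul_smul, smul_smul]

theorem ZMod.eq_of_natCast_eq_of_lt {k x y : ℕ} (hx : x < k) (hy : y < k)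
    (h : (x : ZMod k) = y) : x = y :=
  ((ZMod.natCast_eq_natCast_iff _ _ _).1 h).eq_of_lt_of_lt hx hy

section Residues

variable {k n : ℕ} [NeZero n]

theorem cast_eq_natCast_iff_val_mod (j : ZMod n) (a : ℕ) :
    (j.cast : ZMod k) = a ↔ j.val % k = a % k := by
  rw [ZMod.cast_eq_val, ZMod.natCast_eq_natCast_iff']

theorem artin_apply_of_cast_eq {a : ℕ} (v : ZMod n → Fin k → ℂ) {j : ZMod n}
    (hj : (j.cast : ZMod k) = a) : artin k n a v j = v (j + 1) := by
  rw [artin, if_pos ((cast_eq_natCast_iff_val_mod j a).1 hj)]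

theorem artin_apply_of_cast_eq_add_one [Nontrivial (ZMod k)] {a : ℕ} (v : ZMod n → Fin k → ℂ)
    {j : ZMod n} (hj : (j.cast : ZMod k) = a + 1) : artin k n a v j = mutation k n v j := by
  have hja : ¬ j.val % k = a % k := by
    rw [← cast_eq_natCast_iff_val_mod, hj, add_eq_left]; exact one_ne_zero
  have hja1 : j.val % k = (a + 1) % k :=
    (cast_eq_natCast_iff_val_mod j (a + 1)).1 (by push_cast; exact hj)
  rw [artin, if_neg hja, if_pos hja1, mutation]

theorem artin_apply_of_cast_ne {a : ℕ} (v : ZMod n → Fin k → ℂ) {j : ZMod n}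
    (hja : (j.cast : ZMod k) ≠ a) (hja1 : (j.cast : ZMod k) ≠ a + 1) : artin k n a v j = v j := by
  rw [artin, if_neg ((cast_eq_natCast_iff_val_mod j a).not.1 hja),
    if_neg ((cast_eq_natCast_iff_val_mod j (a + 1)).not.1 (by push_cast; exact hja1))]

end Residues

section Distant

variable {k n : ℕ} [NeZero n] {a c : ℕ}

theorem mutation_artin_of_cast_eq_add_one (hkn : k ∣ n) (hac : (a : ZMod k) ≠ c)
    (hac1 : (a : ZMod k) + 1 ≠ c) (hca1 : (c : ZMod k) + 1 ≠ a) (v : ZMod n → Fin k → ℂ)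
    {j : ZMod n} (hj : (j.cast : ZMod k) = a + 1) :
    mutation k n (artin k n c v) j
      = frozen k n v (j + (c - a : ZMod k).val) • mutation k n v j := by
  have : NeZero k := ⟨fun hk => NeZero.ne n (Nat.eq_zero_of_zero_dvd (hk ▸ hkn))⟩
  have : Nontrivial (ZMod k) := ⟨⟨a, c, hac⟩⟩
  set s := (c - a : ZMod k).val
  have hs : (s : ZMod k) = c - a := ZMod.natCast_zmod_val _
  have hs0 : s ≠ 0 := fun h => hac (sub_eq_zero.1 ((ZMod.val_eq_zero _).1 h)).symm
  have hs1 : s ≠ 1 := fun h => hac1 (eq_sub_iff_add_eq'.1 (by rw [← hs, h, Nat.cast_one]))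
  have hsk : s < k := ZMod.val_lt _
  have hcast (m : ℕ) : ((j + m).cast : ZMod k) = a + 1 + m := by
    rw [ZMod.cast_add hkn, ZMod.cast_natCast hkn, hj]
  refine mutation_eq_frozen_smul_of_exchange (by omega) hsk ?_ ?_ ?_ ?_
  · refine artin_apply_of_cast_ne v ?_ ?_ <;>
      rw [ZMod.cast_sub hkn, ZMod.cast_one hkn, hj, add_sub_cancel_right]
    · exact hac
    · exact hca1.symm
  · rw [artin_apply_of_cast_eq v (by rw [hcast, Nat.cast_pred (by omega), hs]; ring),
      Nat.cast_pred (by omega)]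
    congr 1; ring
  · exact artin_apply_of_cast_eq_add_one v (by rw [hcast, hs]; ring)
  · intro b hb hbs1 hbs
    refine artin_apply_of_cast_ne v ?_ ?_ <;> rw [hcast]
    · intro h
      refine hbs1 (ZMod.eq_of_natCast_eq_of_lt hb (by omega) ?_)
      rw [Nat.cast_pred (by omega), hs]; linear_combination h
    · intro h
      refine hbs (ZMod.eq_of_natCast_eq_of_lt hb hsk ?_)
      rw [hs]; linear_combination h

theorem artin_artin_of_cast_eq_add_one (hkn : k ∣ n) (hac : (a : ZMod k) ≠ c)
    (hac1 : (a : ZMod k) + 1 ≠ c) (hca1 : (c : ZMod k) + 1 ≠ a) (v : ZMod n → Fin k → ℂ)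
    {j : ZMod n} (hj : (j.cast : ZMod k) = a + 1) :
    artin k n a (artin k n c v) j
      = frozen k n v (j + (c - a : ZMod k).val) • artin k n c (artin k n a v) j := by
  have : Nontrivial (ZMod k) := ⟨⟨a, c, hac⟩⟩
  rw [artin_apply_of_cast_eq_add_one _ hj, mutation_artin_of_cast_eq_add_one hkn hac hac1 hca1 v hj,
    artin_apply_of_cast_ne _ (hj ▸ hac1) (by rwa [hj, ne_eq, add_left_inj]),
    artin_apply_of_cast_eq_add_one _ hj]

theorem artin_artin_of_cast_eq (hkn : k ∣ n) (hac : (a : ZMod k) ≠ c)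
    (hac1 : (a : ZMod k) + 1 ≠ c) (hca1 : (c : ZMod k) + 1 ≠ a) (v : ZMod n → Fin k → ℂ)
    {j : ZMod n} (hj : (j.cast : ZMod k) = a) :
    artin k n a (artin k n c v) j = artin k n c (artin k n a v) j := by
  have hj1 : ((j + 1).cast : ZMod k) = a + 1 := by rw [ZMod.cast_add hkn, ZMod.cast_one hkn, hj]
  rw [artin_apply_of_cast_eq _ hj,
    artin_apply_of_cast_ne _ (hj1 ▸ hac1) (by rwa [hj1, ne_eq, add_left_inj]),
    artin_apply_of_cast_ne _ (hj ▸ hac) (hj ▸ hca1.symm), artin_apply_of_cast_eq _ hj]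

theorem artin_artin_of_cast_ne (v : ZMod n → Fin k → ℂ) {j : ZMod n}
    (hja : (j.cast : ZMod k) ≠ a) (hja1 : (j.cast : ZMod k) ≠ a + 1)
    (hjc : (j.cast : ZMod k) ≠ c) (hjc1 : (j.cast : ZMod k) ≠ c + 1) :
    artin k n a (artin k n c v) j = artin k n c (artin k n a v) j := by
  rw [artin_apply_of_cast_ne _ hja hja1, artin_apply_of_cast_ne _ hjc hjc1,
    artin_apply_of_cast_ne _ hjc hjc1, artin_apply_of_cast_ne _ hja hja1]

theorem laurent_single (p : ZMod n) (E : ℤ) (v : ZMod n → Fin k → ℂ) :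
    laurent k n (fun m => if (m : ℕ) = p.val then E else 0) v = frozen k n v p ^ E := by
  rw [laurent, Fintype.prod_eq_single (⟨p.val, p.val_lt⟩ : Fin n)]
  · rw [if_pos rfl, ZMod.natCast_zmod_val]
  · intro m hm
    rw [if_neg (fun h => hm (Fin.ext h)), zpow_zero]

theorem exists_laurent_artin_artin (hkn : k ∣ n) (hac : (a : ZMod k) ≠ c)
    (hac1 : (a : ZMod k) + 1 ≠ c) (hca1 : (c : ZMod k) + 1 ≠ a) (j : ZMod n) :
    ∃ e : Fin n → ℤ, ∀ v : ZMod n → Fin k → ℂ, Generic k n v →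
      artin k n a (artin k n c v) j = laurent k n e v • artin k n c (artin k n a v) j := by
  by_cases hja1 : (j.cast : ZMod k) = a + 1
  · refine ⟨fun m => if (m : ℕ) = (j + (c - a : ZMod k).val).val then 1 else 0, fun v _ => ?_⟩
    rw [laurent_single, zpow_one]
    exact artin_artin_of_cast_eq_add_one hkn hac hac1 hca1 v hja1
  by_cases hjc1 : (j.cast : ZMod k) = c + 1
  · refine ⟨fun m => if (m : ℕ) = (j + (a - c : ZMod k).val).val then -1 else 0, fun v hv => ?_⟩
    rw [laurent_single, zpow_neg_one,
      artin_artin_of_cast_eq_add_one hkn hac.symm hca1 hac1 v hjc1, inv_smul_smul₀ (hv _)]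
  refine ⟨0, fun v _ => ?_⟩
  rw [laurent, Fintype.prod_eq_one _ (fun m => zpow_zero _), one_smul]
  by_cases hja : (j.cast : ZMod k) = a
  · exact artin_artin_of_cast_eq hkn hac hac1 hca1 v hja
  by_cases hjc : (j.cast : ZMod k) = c
  · exact (artin_artin_of_cast_eq hkn hac.symm hca1 hac1 v hjc).symm
  exact artin_artin_of_cast_ne v hja hja1 hjc hjc1

end Distant

theorem distant_artin_generators_quasi_commute_general
    (k r n : ℕ) (hr : 2 ≤ r) (hn : n = r * k)
    (i : ℕ) (hi1 : 3 ≤ i) (hi2 : i ≤ k - 1) (j : ZMod n) :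
    ∃ (ε : ℂ) (e : Fin n → ℤ), (ε = 1 ∨ ε = -1) ∧
      ∀ v : ZMod n → Fin k → ℂ, Generic k n v →
        artin k n i (artin k n 1 v) j
          = (ε * laurent k n e v) • artin k n 1 (artin k n i v) j := by
  have hkn : k ∣ n := hn ▸ dvd_mul_left k r
  have : NeZero n := ⟨by rw [hn]; exact mul_ne_zero (by omega) (by omega)⟩
  have hne {x y : ℕ} (hx : x < k) (hy : y < k) (hxy : x ≠ y) : (x : ZMod k) ≠ y :=
    fun h => hxy (ZMod.eq_of_natCast_eq_of_lt hx hy h)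
  have hi : (i : ZMod k) ≠ (1 : ℕ) := hne (by omega) (by omega) (by omega)
  have hi0 : (i : ZMod k) + 1 ≠ (1 : ℕ) := by
    rw [Nat.cast_one, ne_eq, add_eq_right, ← Nat.cast_zero]
    exact hne (by omega) (by omega) (by omega)
  have h2i : ((1 : ℕ) : ZMod k) + 1 ≠ i := by
    rw [← Nat.cast_succ]; exact hne (by omega) (by omega) (by omega)
  obtain ⟨e, he⟩ := exists_laurent_artin_artin hkn hi hi0 h2i j
  exact ⟨1, e, Or.inl rfl, fun v hv => by rw [one_mul]; exact he v hv⟩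

/-- Quasi-commutation of distant Artin generators (part of Theorem 6.1):
`σ_i ∘ σ_1` and `σ_1 ∘ σ_i` agree componentwise up to signs and Laurent
monomials in the frozen minors, for `3 ≤ i ≤ k − 1`. -/
theorem distant_artin_generators_quasi_commute
    (k r n : ℕ) (hk : 4 ≤ k) (hr : 2 ≤ r) (hn : n = r * k)
    (i : ℕ) (hi1 : 3 ≤ i) (hi2 : i ≤ k - 1) (j : ZMod n) :
    ∃ (ε : ℂ) (e : Fin n → ℤ), (ε = 1 ∨ ε = -1) ∧
      ∀ v : ZMod n → Fin k → ℂ, Generic k n v →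
        artin k n i (artin k n 1 v) j
          = (ε * laurent k n e v) • artin k n 1 (artin k n i v) j :=
  distant_artin_generators_quasi_commute_general k r n hr hn i hi1 hi2 j
end
end

section
/- Quasi-inverse of the first Artin generator (part of Theorem 6.1): Let k ≥ 2, r ≥ 2, n = rk. Define the map τ (denoted σ_1^{-1} in the paper) on configurations by: (τ v)_j = v_{j−1} if j ≡ 2 (mod k); (τ v)_j = det(v_{j+1} | v_{j−k+1} | v_{j−k+2} | ⋯ | v_{j−1})·v_j − det(v_j | v_{j−k+1} | ⋯ | v_{j−1})·v_{j+1} if j ≡ 1 (mod k); and (τ v)_j = v_j otherwise. Then for every index j ∈ ZMod n there exist a sign ε_j ∈ {+1, −1} and a Laurent monomial M_j in the frozen minors (both independent of v) such that for every generic configuration v, the j-th vector of τ(σ_1(v)) equals ε_j · M_j(v) · v_j. In other words, τ ∘ σ_1 is the identity componentwise up to signs and Laurent monomials in the frozen minors. -/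
open scoped BigOperators

noncomputable section

/-- The map `τ` (denoted `σ_1⁻¹` in the paper). -/
def tauMap (k n : ℕ) (v : ZMod n → Fin k → ℂ) : ZMod n → Fin k → ℂ :=
  fun j =>
    if (ZMod.val j) % k = 2 % k then v (j - 1)
    else if (ZMod.val j) % k = 1 % k then
      (colDet (fun b : Fin k =>
          if (b : ℕ) = 0 then v (j + 1)
          else v (j - (k : ZMod n) + ((b : ℕ) : ZMod n)))) • v j
        - (colDet (fun b : Fin k =>
          if (b : ℕ) = 0 then v j
          else v (j - (k : ZMod n) + ((b : ℕ) : ZMod n)))) • v (j + 1)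
    else v j

/-!
Only the case `j ≡ 1 (mod k)` needs an argument. Put `p = j - k`; both determinants in `τ` contain
the block `B = (v_{p+2}, …, v_{j-1})`, which `σ_1` leaves alone, so everything is expressed
through the alternating bilinear form `F(x, y) = det(x | y | B)` evaluated at
`a, b, c, d = v_p, v_{p+1}, v_j, v_{j+1}`. The map `σ_1` replaces `v_j` by `d`, `b` by
`±(F(a,c) b - F(b,c) a)` and `d` by a combination of `d` and `c`. Expanding bilinearly, the
coefficient of `d` cancels, and by the three-term Plücker relation
`F(a,b) F(c,d) - F(a,c) F(b,d) + F(a,d) F(b,c) = 0` the coefficient of `c` is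
`±Δ_{j+1} F(a,b) F(c,d) = ±Δ_{j+1} Δ_p Δ_{p+2}`. The Plücker relation holds because
`x ↦ F(x,b) F(c,d) - F(x,c) F(b,d) + F(x,d) F(b,c)` is linear and kills `b`, `c` and `B`,
which form a basis as `F(b,c) = ±Δ_{p+1} ≠ 0`.
-/

open Matrix

section AlternatingForms

variable {R M N : Type*} [CommRing R] [AddCommGroup M] [Module R M] [AddCommGroup N] [Module R N]

theorem AlternatingMap.map_snoc_eq_neg_one_pow_smul {n : ℕ} (f : M [⋀^Fin (n + 1)]→ₗ[R] N)
    (v : Fin n → M) (y : M) :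
    f (Fin.snoc v y) = (-1 : ℤ) ^ n • f (vecCons y v) := by
  rw [Fin.snoc_eq_cons_rotate, ← Function.comp_def, f.map_perm, sign_finRotate]
  simp [Units.smul_def]
  rfl

def pairForm {n : ℕ} (D : M [⋀^Fin (n + 2)]→ₗ[R] N) (B : Fin n → M) : M →ₗ[R] M →ₗ[R] N :=
  LinearMap.mk₂ R (fun x y => D (vecCons x (vecCons y B)))
    (fun _ _ _ => D.map_vecCons_add _ _ _) (fun _ _ _ => D.map_vecCons_smul _ _ _)
    (fun x _ _ => (D.curryLeft x).map_vecCons_add _ _ _)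
    (fun _ x _ => (D.curryLeft x).map_vecCons_smul _ _ _)

variable {n : ℕ} (D : M [⋀^Fin (n + 2)]→ₗ[R] N) (B : Fin n → M)

theorem pairForm_isAlt : (pairForm D B).IsAlt := fun _ =>
  D.map_eq_zero_of_eq _ (i := 0) (j := 1) rfl Fin.zero_ne_one

theorem pairForm_left_eq_zero (s : Fin n) (y : M) : pairForm D B (B s) y = 0 :=
  D.map_eq_zero_of_eq _ (i := 0) (j := s.succ.succ) rfl (Fin.succ_ne_zero _).symm

theorem map_vecCons_snoc (x y : M) :
    D (vecCons x (Fin.snoc B y)) = (-1 : ℤ) ^ n • pairForm D B x y := by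
  rw [← D.curryLeft_apply_apply, AlternatingMap.map_snoc_eq_neg_one_pow_smul]
  rfl

end AlternatingForms

theorem pairForm_plucker {K M : Type*} [Field K] [AddCommGroup M] [Module K M] {n : ℕ}
    (hM : Module.finrank K M = n + 2) (D : M [⋀^Fin (n + 2)]→ₗ[K] K) (B : Fin n → M)
    (a b c d : M) (hbc : pairForm D B b c ≠ 0) :
    pairForm D B a b * pairForm D B c d - pairForm D B a c * pairForm D B b d
      + pairForm D B a d * pairForm D B b c = 0 := by
  set F := pairForm D B
  have hF := pairForm_isAlt D B
  let G : M →ₗ[K] K := F c d • F.flip b - F b d • F.flip c + F b c • F.flip d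
  have hli : LinearIndependent K (vecCons b (vecCons c B)) := by
    by_contra h
    exact hbc (D.map_linearDependent _ h)
  let e := basisOfLinearIndependentOfCardEqFinrank hli (by simp [hM])
  have hG : G = 0 := e.ext fun l => by
    refine Fin.cases ?_ (Fin.cases ?_ fun s => ?_) l <;>
      simp only [e, G, coe_basisOfLinearIndependentOfCardEqFinrank, LinearMap.add_apply,
        LinearMap.sub_apply, LinearMap.smul_apply, LinearMap.flip_apply, smul_eq_mul,
        LinearMap.zero_apply, cons_val_zero, cons_val_succ]
    · rw [hF.self_eq_zero]; ring
    · rw [hF.self_eq_zero, ← hF.neg c b]; ring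
    · simp [F, pairForm_left_eq_zero]
  have hGa := LinearMap.congr_fun hG a
  simp only [G, LinearMap.add_apply, LinearMap.sub_apply, LinearMap.smul_apply,
    LinearMap.flip_apply, smul_eq_mul, LinearMap.zero_apply] at hGa
  linear_combination hGa

theorem smul_sub_smul_eq_of_plucker {R M : Type*} [CommRing R] [AddCommGroup M] [Module R M]
    {F : M →ₗ[R] M →ₗ[R] R} (hF : F.IsAlt) {a b c d : M}
    (hP : F a b * F c d - F a c * F b d + F a d * F b c = 0) (α β s : R) :
    F (α • d - β • c) ((s * F a c) • b - (s * F b c) • a) • d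
      - F d ((s * F a c) • b - (s * F b c) • a) • (α • d - β • c)
      = -(s * β * F a b * F c d) • c := by
  simp only [map_sub, map_smul, LinearMap.sub_apply, LinearMap.smul_apply, smul_eq_mul]
  rw [← hF.neg a c, ← hF.neg b c, ← hF.neg a d, ← hF.neg b d]
  match_scalars
  · ring
  · linear_combination (s * β) * hP

def window {M : Type*} {n : ℕ} (v : ZMod n → M) (q : ZMod n) (m : ℕ) : Fin m → M :=
  fun t => v (q + (t : ℕ))

section Window

variable {M : Type*} {n : ℕ} (v : ZMod n → M) (q : ZMod n) (m : ℕ)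

theorem window_succ_eq_vecCons : window v q (m + 1) = vecCons (v q) (window v (q + 1) m) := by
  funext t
  refine Fin.cases ?_ (fun s => ?_) t
  · simp [window]
  · simp only [window, Fin.val_succ, Nat.cast_add, Nat.cast_one, cons_val_succ]
    ring_nf

theorem window_succ_eq_snoc : window v q (m + 1) = Fin.snoc (window v q m) (v (q + m)) := by
  funext t
  refine Fin.lastCases ?_ (fun s => ?_) t <;> simp [window]

theorem ite_eq_vecCons_window (x : M) :
    (fun t : Fin (m + 1) => if (t : ℕ) = 0 then x else v (q + (t : ℕ)))
      = vecCons x (window v (q + 1) m) := by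
  funext t
  refine Fin.cases ?_ (fun s => ?_) t
  · simp
  · simp only [window, Fin.val_succ, Nat.cast_add, Nat.cast_one, cons_val_succ,
      Nat.add_one_ne_zero, if_false]
    ring_nf

variable {R N : Type*} [CommRing R] [AddCommGroup M] [Module R M] [AddCommGroup N] [Module R N]
  {K : ℕ} (D : M [⋀^Fin (K + 2)]→ₗ[R] N)

theorem map_vecCons_window (x : M) :
    D (vecCons x (window v q (K + 1)))
      = (-1 : ℤ) ^ K • pairForm D (window v q K) x (v (q + K)) := by
  rw [window_succ_eq_snoc, map_vecCons_snoc]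

theorem map_window_eq_pairForm :
    D (window v q (K + 2)) = pairForm D (window v (q + 2) K) (v q) (v (q + 1)) := by
  rw [window_succ_eq_vecCons, window_succ_eq_vecCons, add_assoc, one_add_one_eq_two]
  rfl

theorem map_window_eq_pairForm_last :
    D (window v q (K + 2)) = pairForm D (window v q K) (v (q + K)) (v (q + (K + 1 : ℕ))) := by
  rw [window_succ_eq_snoc, AlternatingMap.map_snoc_eq_neg_one_pow_smul, map_vecCons_window,
    smul_smul, ← (pairForm_isAlt D _).neg, smul_neg, ← neg_smul, ← pow_add,
    Odd.neg_one_pow ⟨K, by ring⟩, neg_neg, one_smul]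

end Window

theorem colDet_eq_detRowAlternating {k : ℕ} (c : Fin k → Fin k → ℂ) :
    colDet c = detRowAlternating c :=
  det_transpose (of c)

theorem frozen_eq_detRowAlternating_window (k n : ℕ) (v : ZMod n → Fin k → ℂ) (q : ZMod n) :
    frozen k n v q = detRowAlternating (window v q k) :=
  colDet_eq_detRowAlternating _

theorem frozen_add_one_eq_pairForm {K n : ℕ} (v : ZMod n → Fin (K + 2) → ℂ) (q : ZMod n) :
    frozen (K + 2) n v (q + 1)
      = (-1) ^ K * pairForm detRowAlternating (window v (q + 2) K) (v (q + 1)) (v (q + 2 + K)) := by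
  rw [frozen_eq_detRowAlternating_window, window_succ_eq_vecCons, add_assoc, one_add_one_eq_two,
    map_vecCons_window]
  simp

theorem ZMod.val_mod_eq_iff_castHom_eq {k n : ℕ} [NeZero n] (hkn : k ∣ n) (x : ZMod n) (i : ℕ) :
    x.val % k = i % k ↔ ZMod.castHom hkn (ZMod k) x = i := by
  rw [ZMod.castHom_apply, ZMod.cast_eq_val, ZMod.natCast_eq_natCast_iff']

theorem ZMod.natCast_ne_zero_of_pos_of_lt {m t : ℕ} (h0 : 0 < t) (ht : t < m) :
    (t : ZMod m) ≠ 0 :=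
  fun h => Nat.not_dvd_of_pos_of_lt h0 ht ((ZMod.natCast_eq_zero_iff t m).1 h)

theorem ZMod.one_add_one_ne_one (K : ℕ) : (1 + 1 : ZMod (K + 2)) ≠ 1 := by
  simpa using ZMod.natCast_ne_zero_of_pos_of_lt (m := K + 2) one_pos (by omega)

section Residues

variable {k n : ℕ} [NeZero n] (hkn : k ∣ n) (v : ZMod n → Fin k → ℂ) {i : ℕ} {j : ZMod n}

theorem artin_apply_of_castHom_eq (h : ZMod.castHom hkn (ZMod k) j = i) :
    artin k n i v j = v (j + 1) := by
  rw [artin, if_pos ((ZMod.val_mod_eq_iff_castHom_eq hkn j i).2 h)]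

theorem artin_apply_of_castHom_ne (h : ZMod.castHom hkn (ZMod k) j ≠ i)
    (h' : ZMod.castHom hkn (ZMod k) j ≠ i + 1) : artin k n i v j = v j := by
  rw [artin, if_neg (mt (ZMod.val_mod_eq_iff_castHom_eq hkn j i).1 h),
    if_neg (mt (ZMod.val_mod_eq_iff_castHom_eq hkn j (i + 1)).1 (by push_cast; exact h'))]

theorem tauMap_apply_of_castHom_eq_two (h : ZMod.castHom hkn (ZMod k) j = 2) :
    tauMap k n v j = v (j - 1) := by
  rw [tauMap, if_pos ((ZMod.val_mod_eq_iff_castHom_eq hkn j 2).2 (by exact_mod_cast h))]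

theorem tauMap_apply_of_castHom_ne (h : ZMod.castHom hkn (ZMod k) j ≠ 2)
    (h' : ZMod.castHom hkn (ZMod k) j ≠ 1) : tauMap k n v j = v j := by
  rw [tauMap, if_neg (mt (ZMod.val_mod_eq_iff_castHom_eq hkn j 2).1 (by exact_mod_cast h)),
    if_neg (mt (ZMod.val_mod_eq_iff_castHom_eq hkn j 1).1 (by exact_mod_cast h'))]

end Residues

section SigmaOne

variable {K n : ℕ} [NeZero n] (hkn : K + 2 ∣ n) (v : ZMod n → Fin (K + 2) → ℂ) {q j : ZMod n}

theorem artin_apply_of_castHom_eq_add_one {i : ℕ} (h : ZMod.castHom hkn (ZMod (K + 2)) j ≠ i)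
    (h' : ZMod.castHom hkn (ZMod (K + 2)) j = i + 1) :
    artin (K + 2) n i v j
      = detRowAlternating (vecCons (v (j - 1)) (window v (j + 1) (K + 1))) • v j
        - frozen (K + 2) n v j • v (j - 1) := by
  rw [artin, if_neg (mt (ZMod.val_mod_eq_iff_castHom_eq hkn j i).1 h),
    if_pos ((ZMod.val_mod_eq_iff_castHom_eq hkn j (i + 1)).2 (by push_cast; exact h')),
    colDet_eq_detRowAlternating, ite_eq_vecCons_window]

theorem tauMap_apply_of_castHom_eq_one (h : ZMod.castHom hkn (ZMod (K + 2)) j = 1) :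
    tauMap (K + 2) n v j
      = detRowAlternating (vecCons (v (j + 1)) (window v (j - (K + 2 : ℕ) + 1) (K + 1))) • v j
        - detRowAlternating (vecCons (v j) (window v (j - (K + 2 : ℕ) + 1) (K + 1)))
          • v (j + 1) := by
  have h2 : ZMod.castHom hkn (ZMod (K + 2)) j ≠ 2 := by
    rw [h, ← one_add_one_eq_two]; exact (ZMod.one_add_one_ne_one K).symm
  rw [tauMap, if_neg (mt (ZMod.val_mod_eq_iff_castHom_eq hkn j 2).1 (by exact_mod_cast h2)),
    if_pos ((ZMod.val_mod_eq_iff_castHom_eq hkn j 1).2 (by exact_mod_cast h)),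
    colDet_eq_detRowAlternating, colDet_eq_detRowAlternating, ite_eq_vecCons_window,
    ite_eq_vecCons_window]

theorem artin_one_apply_add_one (hq : ZMod.castHom hkn (ZMod (K + 2)) q = 1) :
    artin (K + 2) n 1 v (q + 1)
      = ((-1) ^ K * pairForm detRowAlternating (window v (q + 2) K) (v q) (v (q + 2 + K)))
          • v (q + 1) - frozen (K + 2) n v (q + 1) • v q := by
  have hq1 : ZMod.castHom hkn (ZMod (K + 2)) (q + 1) = 1 + 1 := by rw [map_add, map_one, hq]
  rw [artin_apply_of_castHom_eq_add_one hkn v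
    (by rw [hq1, Nat.cast_one]; exact ZMod.one_add_one_ne_one K) (by rw [hq1, Nat.cast_one]),
    add_sub_cancel_right, add_assoc, one_add_one_eq_two, map_vecCons_window]
  simp

theorem window_artin_one (hq : ZMod.castHom hkn (ZMod (K + 2)) q = 1) :
    window (artin (K + 2) n 1 v) (q + 2) K = window v (q + 2) K := by
  funext s
  have hqs : ZMod.castHom hkn (ZMod (K + 2)) (q + 2 + (s : ℕ))
      = 1 + ((s + 2 : ℕ) : ZMod (K + 2)) := by
    rw [map_add, map_add, hq, map_natCast, map_ofNat]; push_cast; ring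
  apply artin_apply_of_castHom_ne hkn v
  · rw [Nat.cast_one, Ne, ← sub_eq_zero, hqs, add_sub_cancel_left]
    exact ZMod.natCast_ne_zero_of_pos_of_lt (by omega) (by omega)
  · rw [Ne, ← sub_eq_zero, hqs,
      show 1 + ((s + 2 : ℕ) : ZMod (K + 2)) - ((1 : ℕ) + 1) = ((s + 1 : ℕ) : ZMod (K + 2)) by
        push_cast; ring]
    exact ZMod.natCast_ne_zero_of_pos_of_lt (by omega) (by omega)

theorem tauMap_artin_one_apply_of_castHom_eq_one (hv : Generic (K + 2) n v)
    (hj : ZMod.castHom hkn (ZMod (K + 2)) j = 1) :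
    tauMap (K + 2) n (artin (K + 2) n 1 v) j
      = (-(-1) ^ K * (frozen (K + 2) n v (j + 1) * frozen (K + 2) n v (j - (K + 2 : ℕ))
          * frozen (K + 2) n v (j - (K + 2 : ℕ) + 2))) • v j := by
  set p := j - ((K + 2 : ℕ) : ZMod n) with hp
  set F := pairForm detRowAlternating (window v (p + 2) K)
  have hpj : p + 2 + (K : ℕ) = j := by rw [hp]; push_cast; ring
  have hpj' : p + 2 + ((K + 1 : ℕ) : ZMod n) = j + 1 := by rw [hp]; push_cast; ring
  have hpmod : ZMod.castHom hkn (ZMod (K + 2)) p = 1 := by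
    rw [hp, map_sub, map_natCast, ZMod.natCast_self, hj, sub_zero]
  have hw_j : artin (K + 2) n 1 v j = v (j + 1) :=
    artin_apply_of_castHom_eq hkn v (by rw [hj, Nat.cast_one])
  obtain ⟨α, hw_j1⟩ : ∃ α : ℂ,
      artin (K + 2) n 1 v (j + 1) = α • v (j + 1) - frozen (K + 2) n v (j + 1) • v j :=
    ⟨_, artin_one_apply_add_one hkn v hj⟩
  have hw_p1 := artin_one_apply_add_one hkn v hpmod
  rw [frozen_add_one_eq_pairForm, hpj] at hw_p1
  have hτ : tauMap (K + 2) n (artin (K + 2) n 1 v) j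
      = F (artin (K + 2) n 1 v (j + 1)) (artin (K + 2) n 1 v (p + 1)) • artin (K + 2) n 1 v j
        - F (artin (K + 2) n 1 v j) (artin (K + 2) n 1 v (p + 1))
          • artin (K + 2) n 1 v (j + 1) := by
    rw [tauMap_apply_of_castHom_eq_one hkn _ hj, window_succ_eq_vecCons, add_assoc,
      one_add_one_eq_two, window_artin_one hkn v hpmod]
    rfl
  have hΔp : frozen (K + 2) n v p = F (v p) (v (p + 1)) := by
    rw [frozen_eq_detRowAlternating_window, map_window_eq_pairForm]
  have hΔp2 : frozen (K + 2) n v (p + 2) = F (v j) (v (j + 1)) := by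
    rw [frozen_eq_detRowAlternating_window, map_window_eq_pairForm_last, hpj, hpj']
  have hbc : F (v (p + 1)) (v j) ≠ 0 := fun h =>
    hv (p + 1) (by rw [frozen_add_one_eq_pairForm, hpj, h, mul_zero])
  rw [hτ, hw_p1, hw_j, hw_j1, smul_sub_smul_eq_of_plucker (pairForm_isAlt _ _)
    (pairForm_plucker (Module.finrank_fin_fun ℂ) _ _ _ _ _ _ hbc), ← hΔp, ← hΔp2]
  congr 1
  ring

end SigmaOne

def singleExponent {n : ℕ} (q : ZMod n) : Fin n → ℤ :=
  fun m => if ((m : ℕ) : ZMod n) = q then 1 else 0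

section Laurent

variable {k n : ℕ} {v : ZMod n → Fin k → ℂ}

theorem laurent_zero : laurent k n 0 v = 1 := by
  simp [laurent]

theorem laurent_add (hv : Generic k n v) (e e' : Fin n → ℤ) :
    laurent k n (e + e') v = laurent k n e v * laurent k n e' v := by
  simp only [laurent, Pi.add_apply, zpow_add₀ (hv _), Finset.prod_mul_distrib]

theorem laurent_singleExponent [NeZero n] (q : ZMod n) :
    laurent k n (singleExponent q) v = frozen k n v q := by
  rw [laurent, Finset.prod_eq_single ⟨q.val, q.val_lt⟩]
  · simp [singleExponent]
  · intro m _ hm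
    rw [singleExponent, if_neg, zpow_zero]
    rintro rfl
    exact hm (Fin.ext (ZMod.val_cast_of_lt m.isLt).symm)
  · simp

end Laurent

/-- Quasi-inverse of the first Artin generator (part of Theorem 6.1):
`τ ∘ σ_1` is the identity componentwise up to signs and Laurent monomials
in the frozen minors. -/
theorem tau_is_quasi_inverse_of_sigma_one
    (k r n : ℕ) (hk : 2 ≤ k) (hr : 2 ≤ r) (hn : n = r * k) (j : ZMod n) :
    ∃ (ε : ℂ) (e : Fin n → ℤ), (ε = 1 ∨ ε = -1) ∧
      ∀ v : ZMod n → Fin k → ℂ, Generic k n v →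
        tauMap k n (artin k n 1 v) j = (ε * laurent k n e v) • v j := by
  obtain ⟨K, rfl⟩ : ∃ K, k = K + 2 := ⟨k - 2, by omega⟩
  have : NeZero n := ⟨by rw [hn]; exact mul_ne_zero (by omega) (by omega)⟩
  have hkn : K + 2 ∣ n := hn ▸ dvd_mul_left _ _
  set ρ := ZMod.castHom hkn (ZMod (K + 2))
  by_cases h2 : ρ j = 2
  · refine ⟨1, 0, Or.inl rfl, fun v _ => ?_⟩
    rw [tauMap_apply_of_castHom_eq_two hkn _ h2, artin_apply_of_castHom_eq hkn v
      (by rw [map_sub, map_one, h2, Nat.cast_one]; norm_num), sub_add_cancel, laurent_zero]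
    simp
  by_cases h1 : ρ j = 1
  · refine ⟨-(-1) ^ K, singleExponent (j + 1) + singleExponent (j - ((K + 2 : ℕ) : ZMod n))
      + singleExponent (j - ((K + 2 : ℕ) : ZMod n) + 2), ?_, fun v hv => ?_⟩
    · rcases neg_one_pow_eq_or ℂ K with h | h <;> simp [h]
    · rw [tauMap_artin_one_apply_of_castHom_eq_one hkn v hv h1, laurent_add hv, laurent_add hv,
        laurent_singleExponent, laurent_singleExponent, laurent_singleExponent]
  · refine ⟨1, 0, Or.inl rfl, fun v _ => ?_⟩
    rw [tauMap_apply_of_castHom_ne hkn _ h2 h1, artin_apply_of_castHom_ne hkn v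
      (by rwa [Nat.cast_one]) (by rwa [Nat.cast_one, one_add_one_eq_two]), laurent_zero]
    simp

end
end

section
/- Partial-wedge formula for the flag-to-vectors map Φ (the computational content of 'Ψ ∘ Φ is the identity up to frozen variables' in the proof of Theorem 7.2): Let k ≥ 2 and let f_1,…,f_{k−1} and g_1,…,g_{k−1} be vectors of ℂ^k. Define u_1 := f_1 and, for 2 ≤ a ≤ k−1, u_a := (f_1 f_2 ⋯ f_a) ∩ (g_1 g_2 ⋯ g_{k+1−a}) (the degree-one Grassmann–Cayley meet). Then for every 1 ≤ a ≤ k−1, the following identity holds in the a-th exterior power of ℂ^k: u_1 ∧ u_2 ∧ ⋯ ∧ u_a = (∏_{j=1}^{a−1} det(f_1 | ⋯ | f_j | g_1 | ⋯ | g_{k−j})) · (f_1 ∧ f_2 ∧ ⋯ ∧ f_a). -/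
open scoped BigOperators

noncomputable section

/-- `uVec k f g a` is the vector `u_{a+1}`: `u_1 = f_1`, and for `2 ≤ a ≤ k−1`,
`u_a = (f_1 ⋯ f_a) ∩ (g_1 ⋯ g_{k+1−a})` (degree-one Grassmann–Cayley meet). -/
def uVec (k : ℕ) (f g : Fin (k - 1) → Fin k → ℂ) : Fin (k - 1) → Fin k → ℂ :=
  fun a =>
    if ha : (a : ℕ) = 0 then f a
    else
      gcMeet
        (fun m : Fin ((a : ℕ) + 1) =>
          f ⟨(m : ℕ), by have := m.isLt; have := a.isLt; omega⟩)
        (fun m : Fin (k - (a : ℕ)) =>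
          g ⟨(m : ℕ), by have := m.isLt; have := a.isLt; omega⟩)

/-- `mixDet k f g j` is the determinant `det(f_1 | ⋯ | f_j | g_1 | ⋯ | g_{k−j})`
(intended for `1 ≤ j ≤ k − 1`). -/
def mixDet (k : ℕ) (f g : Fin (k - 1) → Fin k → ℂ) (j : ℕ) : ℂ :=
  colDet (fun c : Fin k =>
    if hc : (c : ℕ) < j then
      (if h2 : (c : ℕ) < k - 1 then f ⟨(c : ℕ), h2⟩ else 0)
    else
      (if h3 : (c : ℕ) - j < k - 1 then g ⟨(c : ℕ) - j, h3⟩ else 0))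


/-!
Induction on `a`. Up to a scalar, `u_1 ∧ ⋯ ∧ u_{a-1}` is `f_1 ∧ ⋯ ∧ f_{a-1}`, and wedging this
with the meet `u_a = Σ_i ± det(f_1 ⋯ f̂_i ⋯ f_a g_1 ⋯ g_{k+1-a}) f_i` kills every term except the
one of `f_a`, whose coefficient is `det(f_1 | ⋯ | f_{a-1} | g_1 | ⋯ | g_{k+1-a})`.
-/

def appendCols {k p q : ℕ} (a : Fin p → Fin k → ℂ) (b : Fin q → Fin k → ℂ) :
    Fin k → Fin k → ℂ :=
  fun c =>
    if hc : (c : ℕ) < p then a ⟨c, hc⟩ else if hq : (c : ℕ) - p < q then b ⟨c - p, hq⟩ else 0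

lemma gcMeet_eq_sum_succAbove {k n q : ℕ} (a : Fin (n + 1) → Fin k → ℂ)
    (b : Fin q → Fin k → ℂ) :
    gcMeet a b = ∑ i : Fin (n + 1),
      ((-1 : ℂ) ^ (n - (i : ℕ)) * colDet (appendCols (a ∘ i.succAbove) b)) • a i := by
  refine Finset.sum_congr rfl fun i _ => ?_
  congr 3
  funext c
  simp only [appendCols, Function.comp_apply, Nat.add_sub_cancel]
  split_ifs with hc hci
  · rw [Fin.succAbove_of_castSucc_lt _ _ (by simpa [Fin.lt_def] using hci)]; rfl
  · rw [Fin.succAbove_of_le_castSucc _ _ (by simpa [Fin.le_def] using hci)]; rfl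
  all_goals rfl

theorem ExteriorAlgebra.ofFn_prod_ι_mul_ι_self {R M : Type*} [CommRing R] [AddCommGroup M]
    [Module R M] {n : ℕ} (v : Fin n → M) (i : Fin n) :
    (List.ofFn fun m => ι R (v m)).prod * ι R (v i) = 0 := by
  have h := (ιMulti R (n + 1)).map_eq_zero_of_eq (Fin.snoc v (v i))
    (i := i.castSucc) (j := Fin.last n) (by simp) (Fin.castSucc_lt_last i).ne
  rw [ιMulti_apply, List.ofFn_succ'] at h
  simpa using h

open ExteriorAlgebra in
lemma ofFn_prod_ι_mul_ι_gcMeet {k n q : ℕ} (a : Fin (n + 1) → Fin k → ℂ)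
    (b : Fin q → Fin k → ℂ) :
    (List.ofFn fun m : Fin n => ι ℂ (a m.castSucc)).prod * ι ℂ (gcMeet a b)
      = colDet (appendCols (a ∘ Fin.castSucc) b) • (List.ofFn fun m => ι ℂ (a m)).prod := by
  have hvanish (i : Fin n) :
      (List.ofFn fun m : Fin n => ι ℂ (a m.castSucc)).prod * ι ℂ (a i.castSucc) = 0 :=
    ofFn_prod_ι_mul_ι_self (a ∘ Fin.castSucc) i
  rw [gcMeet_eq_sum_succAbove, map_sum, Finset.mul_sum, Fin.sum_univ_castSucc,
    Finset.sum_eq_zero fun i _ => by rw [map_smul, mul_smul_comm, hvanish, smul_zero],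
    zero_add, List.ofFn_succ', List.prod_concat, map_smul, mul_smul_comm, Fin.succAbove_last,
    Fin.val_last, Nat.sub_self, pow_zero, one_mul]

lemma mixDet_eq_colDet_appendCols {k n : ℕ} (f g : Fin (k - 1) → Fin k → ℂ)
    (hn : 1 ≤ n) (hnk : n ≤ k - 1) :
    mixDet k f g n = colDet (appendCols (fun m : Fin n => f ⟨m, by omega⟩)
      (fun m : Fin (k - n) => g ⟨m, by omega⟩)) := by
  unfold mixDet appendCols
  congr 1
  funext c
  have := c.isLt
  split_ifs <;> first | rfl | omega

open ExteriorAlgebra in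
lemma ofFn_prod_ι_mul_ι_uVec {k : ℕ} (f g : Fin (k - 1) → Fin k → ℂ) {n : ℕ}
    (hn : 1 ≤ n) (hnk : n < k - 1) :
    (List.ofFn fun m : Fin n => ι ℂ (f ⟨m, by omega⟩)).prod * ι ℂ (uVec k f g ⟨n, hnk⟩)
      = mixDet k f g n • (List.ofFn fun m : Fin (n + 1) => ι ℂ (f ⟨m, by omega⟩)).prod := by
  rw [uVec, dif_neg (by simp; omega), mixDet_eq_colDet_appendCols f g hn hnk.le]
  exact ofFn_prod_ι_mul_ι_gcMeet _ _

/-- Partial-wedge formula for the flag-to-vectors map `Φ` (the computational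
content of `Ψ ∘ Φ` being the identity up to frozen variables, from the proof of
Theorem 7.2): in the exterior algebra of `ℂ^k`,
`u_1 ∧ ⋯ ∧ u_a = (∏_{j=1}^{a−1} det(f_1|⋯|f_j|g_1|⋯|g_{k−j})) • (f_1 ∧ ⋯ ∧ f_a)`. -/
theorem partial_wedge_formula
    (k : ℕ) (f g : Fin (k - 1) → Fin k → ℂ)
    (a : ℕ) (ha2 : a ≤ k - 1) :
    (List.ofFn fun m : Fin a =>
        ExteriorAlgebra.ι ℂ
          (uVec k f g ⟨(m : ℕ), by have := m.isLt; omega⟩)).prod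
      = (∏ j ∈ Finset.range (a - 1), mixDet k f g (j + 1)) •
        (List.ofFn fun m : Fin a =>
          ExteriorAlgebra.ι ℂ (f ⟨(m : ℕ), by have := m.isLt; omega⟩)).prod := by
  induction a with
  | zero => simp
  | succ n ih =>
    cases n with
    | zero => simp [uVec]
    | succ m =>
      conv_lhs => rw [List.ofFn_succ', List.prod_concat]
      simp only [Fin.val_castSucc, Fin.val_last]
      rw [ih (by omega), smul_mul_assoc, ofFn_prod_ι_mul_ι_uVec f g m.succ_pos (by omega),
        smul_smul]
      simp only [Nat.add_sub_cancel, Finset.prod_range_succ]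

end
end

section
/- Determinant of the flag-to-vectors window (the computational content of 'Φ* sends a frozen Plücker coordinate to a product of k−1 frozen Fock–Goncharov coordinates' in the proof of Theorem 7.2): Let k ≥ 2 and let f_1,…,f_{k−1} and g_1,…,g_{k−1} be vectors of ℂ^k. Define u_1 := f_1, u_a := (f_1 f_2 ⋯ f_a) ∩ (g_1 g_2 ⋯ g_{k+1−a}) (the degree-one Grassmann–Cayley meet) for 2 ≤ a ≤ k−1, and u_k := g_1. Then det(u_1 | u_2 | ⋯ | u_k) = ∏_{j=1}^{k−1} det(f_1 | ⋯ | f_j | g_1 | ⋯ | g_{k−j}). -/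
open scoped BigOperators

noncomputable section

/-!
Put `w_1, …, w_k := f_1, …, f_{k-1}, g_1`. Expanding the meet, for `1 < a < k` the vector `u_a` is
`det(f_1 ⋯ f_{a-1} g_1 ⋯ g_{k+1-a}) • f_a` plus a combination of `f_1, …, f_{a-1}`, while
`u_1 = w_1` and `u_k = w_k`. So `(u_1 | ⋯ | u_k) = (w_1 | ⋯ | w_k) · T` with `T` upper triangular
with diagonal `1, det(f_1 g_1 ⋯ g_{k-1}), …, det(f_1 ⋯ f_{k-2} g_1 g_2), 1`, and
`det(w_1 | ⋯ | w_k) = det(f_1 ⋯ f_{k-1} g_1)` is the remaining factor.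
-/

theorem Matrix.det_eq_prod_mul_det_of_sub_smul_mem_span {ι R : Type*} [Fintype ι]
    [DecidableEq ι] [LinearOrder ι] [LocallyFiniteOrderBot ι] [CommRing R]
    (A B : Matrix ι ι R) (d : ι → R)
    (h : ∀ i, A i - d i • B i ∈ Submodule.span R (B '' Set.Iio i)) :
    A.det = (∏ i, d i) * B.det := by
  have hc : ∀ i, ∃ c : ι → R, ∑ j ∈ Finset.Iio i, c j • B j = A i - d i • B i := fun i =>
    (Submodule.mem_span_image_finset_iff_exists_fun' R).mp (by rw [Finset.coe_Iio]; exact h i)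
  choose c hc using hc
  let L : Matrix ι ι R := Matrix.of fun i j => if j < i then c i j else if j = i then d i else 0
  have hL : L.IsLowerTriangular := fun i j (hij : i < j) => by
    simp [L, hij.ne', hij.not_gt]
  have hA : A = L * B := by
    ext i k
    have row : A i k = ∑ j ∈ Finset.Iio i, c i j * B j k + d i * B i k := by
      rw [eq_sub_iff_add_eq.mp (by simpa using congrFun (hc i) k)]
    simp only [row, L, Matrix.mul_apply, Matrix.of_apply, ite_mul, zero_mul, Finset.sum_ite,
      Finset.filter_gt_eq_Iio]
    simp [Finset.filter_eq']
  rw [hA, Matrix.det_mul, Matrix.det_of_isLowerTriangular L hL]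
  simp [L]

theorem colDet_eq_det {k : ℕ} (c : Fin k → Fin k → ℂ) : colDet c = (Matrix.of c).det :=
  Matrix.det_transpose _

theorem gcMeet_sub_smul_last_mem_span {k m q : ℕ} (a : Fin (m + 1) → Fin k → ℂ)
    (b : Fin q → Fin k → ℂ) :
    gcMeet a b - colDet (fun c : Fin k =>
        if hc : (c : ℕ) < m then a ⟨c, by omega⟩
        else if hq : (c : ℕ) - m < q then b ⟨c - m, hq⟩ else 0) • a (Fin.last m)
      ∈ Submodule.span ℂ (Set.range (a ∘ Fin.castSucc)) := by
  rw [gcMeet, Fin.sum_univ_castSucc, add_sub_assoc]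
  refine add_mem (Submodule.sum_mem _ fun i _ =>
    Submodule.smul_mem _ _ (Submodule.subset_span ⟨i, rfl⟩)) ?_
  convert Submodule.zero_mem _ using 1
  rw [sub_eq_zero]
  simp only [Fin.val_last, Nat.add_sub_cancel, Nat.sub_self, pow_zero, one_mul]
  congr 2
  funext c
  split_ifs <;> rfl

section Window

variable {k : ℕ} (f g : Fin (k - 1) → Fin k → ℂ)

def flagFrame (hk : 2 ≤ k) : Fin k → Fin k → ℂ :=
  fun c => if hc : (c : ℕ) < k - 1 then f ⟨c, hc⟩ else g ⟨0, Nat.sub_pos_of_lt hk⟩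

def meetFrame (hk : 2 ≤ k) : Fin k → Fin k → ℂ :=
  fun c => if hc : (c : ℕ) < k - 1 then uVec k f g ⟨c, hc⟩ else g ⟨0, Nat.sub_pos_of_lt hk⟩

def frameDiag (j : ℕ) : ℂ :=
  if j = 0 ∨ j = k - 1 then 1 else mixDet k f g j

theorem colDet_flagFrame (hk : 2 ≤ k) : colDet (flagFrame f g hk) = mixDet k f g (k - 1) := by
  unfold mixDet flagFrame
  congr 1
  funext c
  split_ifs <;> first | rfl | omega | exact congrArg g (Fin.ext (by dsimp only; omega))

theorem meetFrame_sub_smul_flagFrame_mem_span (hk : 2 ≤ k) (b : Fin k) :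
    meetFrame f g hk b - frameDiag f g b • flagFrame f g hk b
      ∈ Submodule.span ℂ (flagFrame f g hk '' Set.Iio b) := by
  obtain ⟨b, hb⟩ := b
  by_cases hb0 : b = 0
  · subst hb0
    simp [meetFrame, flagFrame, frameDiag, uVec]
  by_cases hbk : b = k - 1
  · subst hbk
    simp [meetFrame, flagFrame, frameDiag]
  have hb' : b < k - 1 := by omega
  have hmeet := gcMeet_sub_smul_last_mem_span (fun m : Fin (b + 1) => f ⟨m, by omega⟩)
    (fun m : Fin (k - b) => g ⟨m, by omega⟩)
  convert Submodule.span_mono ?_ hmeet using 2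
  · simp [meetFrame, uVec, hb', hb0]
  · congr 1
    · rw [Fin.val_mk, frameDiag, if_neg (by omega), mixDet]
      congr 1
      funext c
      split_ifs <;> first | rfl | omega
    · simp [flagFrame, hb']
  · rintro _ ⟨i, rfl⟩
    exact ⟨⟨i, by omega⟩, i.isLt, by simp [flagFrame, show (i : ℕ) < k - 1 by omega]⟩

theorem prod_frameDiag_mul_mixDet (hk : 2 ≤ k) :
    (∏ b : Fin k, frameDiag f g b) * mixDet k f g (k - 1)
      = ∏ j ∈ Finset.range (k - 1), mixDet k f g (j + 1) := by
  obtain ⟨n, rfl⟩ : ∃ n, k = n + 2 := ⟨k - 2, by omega⟩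
  have hinner : ∀ j ∈ Finset.range n, frameDiag f g (j + 1) = mixDet (n + 2) f g (j + 1) :=
    fun j hj => if_neg (by rw [Finset.mem_range] at hj; omega)
  rw [Fin.prod_univ_eq_prod_range (fun j => frameDiag f g j), Finset.prod_range_succ,
    Finset.prod_range_succ', Finset.prod_congr rfl hinner, show n + 2 - 1 = n + 1 from rfl,
    Finset.prod_range_succ]
  simp [frameDiag]

end Window

/-- Determinant of the flag-to-vectors window (the computational content of
`Φ*` sending a frozen Plücker coordinate to a product of `k−1` frozen
Fock–Goncharov coordinates, from the proof of Theorem 7.2):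
`det(u_1 | u_2 | ⋯ | u_k) = ∏_{j=1}^{k−1} det(f_1|⋯|f_j|g_1|⋯|g_{k−j})`,
where `u_k = g_1`. -/
theorem flag_window_determinant
    (k : ℕ) (hk : 2 ≤ k) (f g : Fin (k - 1) → Fin k → ℂ) :
    colDet (fun c : Fin k =>
        if hc : (c : ℕ) < k - 1 then uVec k f g ⟨(c : ℕ), hc⟩
        else g ⟨0, by omega⟩)
      = ∏ j ∈ Finset.range (k - 1), mixDet k f g (j + 1) := by
  change colDet (meetFrame f g hk) = _
  have htri := Matrix.det_eq_prod_mul_det_of_sub_smul_mem_span (Matrix.of (meetFrame f g hk))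
    (Matrix.of (flagFrame f g hk)) _ (meetFrame_sub_smul_flagFrame_mem_span f g hk)
  rw [colDet_eq_det, htri, ← colDet_eq_det, colDet_flagFrame, prod_frameDiag_mul_mixDet f g hk]

end
end

section
/- Span property of the degree-one meet (the geometric property of the Grassmann–Cayley meet used throughout Section 6): Let k ≥ 2, 1 ≤ p ≤ k, and let a_1,…,a_p and b_1,…,b_{k+1−p} be vectors of ℂ^k such that the family (a_1,…,a_p) is linearly independent and the family (b_1,…,b_{k+1−p}) is linearly independent. Let A := span{a_1,…,a_p}, B := span{b_1,…,b_{k+1−p}}, and let w := (a_1⋯a_p) ∩ (b_1⋯b_{k+1−p}) be their degree-one Grassmann–Cayley meet. Then w ≠ 0 if and only if A + B = ℂ^k, and in that case span{w} = A ∩ B. -/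
open scoped BigOperators

noncomputable section

/-! Concatenate `a` and `b` into `k + 1` vectors `v₀, …, v_k` of `ℂ^k` and let `Dᵢ` be the
maximal minor omitting `vᵢ`. Laplace expansion of a determinant with a repeated row gives the
relation `∑ (-1)^i Dᵢ vᵢ = 0`. Up to sign the meet is the `a`-part of this relation, hence also
the `b`-part with the opposite sign, so it lies in `A ∩ B`. By independence of `a` and of `b` it
vanishes iff all `Dᵢ` do, i.e. iff the `vᵢ` do not span `ℂ^k`, i.e. iff `A + B ≠ ℂ^k`. If
`A + B = ℂ^k` then
`dim (A ∩ B) = p + (k + 1 - p) - k = 1`, and the nonzero meet spans it. -/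

open Submodule

theorem sum_neg_one_pow_mul_det_succAbove_smul {R : Type*} [CommRing R] {n : ℕ}
    (v : Fin (n + 1) → Fin n → R) :
    ∑ i : Fin (n + 1), ((-1) ^ (i : ℕ) * (Matrix.of fun r s => v (i.succAbove s) r).det) • v i
      = 0 := by
  ext c
  -- rows: coordinate `c`, then coordinates `0, …, n - 1`; so rows `0` and `c + 1` agree
  let A : Matrix (Fin (n + 1)) (Fin (n + 1)) R := Matrix.of fun r s => v s (Fin.cases c id r)
  have hA : A.det = 0 := Matrix.det_zero_of_row_eq (Fin.succ_ne_zero c).symm rfl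
  have hminor (j : Fin (n + 1)) :
      A.submatrix Fin.succ j.succAbove = Matrix.of fun r s => v (j.succAbove s) r := rfl
  rw [Matrix.det_succ_row_zero] at hA
  simpa [hminor, A, Finset.sum_apply, mul_right_comm] using hA

theorem span_range_eq_top_iff_exists_succAbove {K V : Type*} [Field K] [AddCommGroup V]
    [Module K V] [FiniteDimensional K V] {n : ℕ} (hV : Module.finrank K V = n)
    (v : Fin (n + 1) → V) :
    span K (Set.range v) = ⊤ ↔ ∃ i : Fin (n + 1), span K (Set.range (v ∘ i.succAbove)) = ⊤ := by
  refine ⟨fun htop => ?_, fun ⟨i, hi⟩ =>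
    top_unique (hi ▸ span_mono (Set.range_comp_subset_range _ _))⟩
  have hdep : ¬ LinearIndependent K v := fun hli => by
    simpa [hV] using hli.fintype_card_le_finrank
  obtain ⟨i, hi⟩ : ∃ i, v i ∈ span K (v '' (Set.univ \ {i})) := by
    simpa [linearIndependent_iff_notMem_span] using hdep
  refine ⟨i, top_unique (htop ▸ span_le.mpr ?_)⟩
  rw [Set.range_comp, Fin.range_succAbove, Set.compl_eq_univ_sdiff]
  rintro _ ⟨j, rfl⟩
  by_cases hji : j = i
  · exact hji ▸ hi
  · exact subset_span ⟨j, by simpa using hji, rfl⟩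

theorem colDet_ne_zero_iff {k : ℕ} (c : Fin k → Fin k → ℂ) :
    colDet c ≠ 0 ↔ span ℂ (Set.range c) = ⊤ := by
  have hdet : colDet c = (Pi.basisFun ℂ (Fin k)).det c := by
    rw [Pi.basisFun_det, colDet, ← Matrix.det_transpose]
    rfl
  rw [hdet, ← isUnit_iff_ne_zero, ← Module.Basis.is_basis_iff_det, and_iff_right_iff_imp]
  exact fun htop => linearIndependent_of_top_le_span_of_card_eq_finrank htop.ge (by simp)

theorem neg_one_pow_sub {R : Type*} [Ring R] {m i : ℕ} (h : i ≤ m) :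
    (-1 : R) ^ (m - i) = (-1) ^ m * (-1) ^ i := by
  obtain ⟨d, rfl⟩ := Nat.exists_eq_add_of_le h
  rw [Nat.add_sub_cancel_left, pow_add, ((Commute.neg_one_left _).pow_left i).eq, mul_assoc,
    ← pow_add, Even.neg_one_pow ⟨i, rfl⟩, mul_one]

def omitMinor {k : ℕ} (v : Fin (k + 1) → Fin k → ℂ) (i : Fin (k + 1)) : ℂ :=
  colDet (v ∘ i.succAbove)

section omitMinor

variable {k : ℕ} (v : Fin (k + 1) → Fin k → ℂ)

theorem sum_neg_one_pow_mul_omitMinor_smul :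
    ∑ i : Fin (k + 1), ((-1) ^ (i : ℕ) * omitMinor v i) • v i = 0 :=
  sum_neg_one_pow_mul_det_succAbove_smul v

theorem exists_omitMinor_ne_zero_iff :
    (∃ i, omitMinor v i ≠ 0) ↔ span ℂ (Set.range v) = ⊤ := by
  simp only [omitMinor, colDet_ne_zero_iff]
  exact (span_range_eq_top_iff_exists_succAbove (Module.finrank_fin_fun ℂ) v).symm

end omitMinor

theorem Fin.val_succAbove_eq_ite {n : ℕ} (p : Fin (n + 1)) (i : Fin n) :
    (p.succAbove i : ℕ) = if (i : ℕ) < p then (i : ℕ) else (i : ℕ) + 1 := by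
  unfold Fin.succAbove
  split_ifs <;> simp_all [Fin.lt_def]

def joinFamily {V : Type*} {p q k : ℕ} (h : p + q = k + 1) (a : Fin p → V) (b : Fin q → V)
    (i : Fin (k + 1)) : V :=
  if hi : (i : ℕ) < p then a ⟨i, hi⟩ else b ⟨i - p, by omega⟩

section joinFamily

variable {V : Type*} {p q k : ℕ} (h : p + q = k + 1) (a : Fin p → V) (b : Fin q → V)

@[simp]
theorem joinFamily_castAdd (i : Fin p) :
    joinFamily h a b (Fin.cast h (Fin.castAdd q i)) = a i := by
  simp [joinFamily]

@[simp]
theorem joinFamily_natAdd (j : Fin q) :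
    joinFamily h a b (Fin.cast h (Fin.natAdd p j)) = b j := by
  simp [joinFamily]

theorem range_joinFamily : Set.range (joinFamily h a b) = Set.range a ∪ Set.range b := by
  ext x
  constructor
  · rintro ⟨i, rfl⟩
    unfold joinFamily
    split_ifs
    exacts [Or.inl ⟨_, rfl⟩, Or.inr ⟨_, rfl⟩]
  · rintro (⟨i, rfl⟩ | ⟨j, rfl⟩)
    exacts [⟨_, joinFamily_castAdd h a b i⟩, ⟨_, joinFamily_natAdd h a b j⟩]

end joinFamily

section gcMeet

variable {p q k : ℕ} (a : Fin p → Fin k → ℂ) (b : Fin q → Fin k → ℂ) (h : p + q = k + 1)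

theorem gcMeet_eq_sum_left : gcMeet a b = ∑ i : Fin p,
    ((-1) ^ (p - 1 - (i : ℕ)) * omitMinor (joinFamily h a b) (Fin.cast h (Fin.castAdd q i)))
      • a i := by
  refine Finset.sum_congr rfl fun i _ => ?_
  congr 3
  funext c
  simp only [Function.comp_apply, joinFamily, Fin.val_succAbove_eq_ite, Fin.val_cast,
    Fin.val_castAdd]
  split_ifs <;> first | omega | congr 1 <;> ext <;> simp <;> omega

theorem gcMeet_eq_sum_right : gcMeet a b = ∑ j : Fin q,
    ((-1) ^ (j : ℕ) * omitMinor (joinFamily h a b) (Fin.cast h (Fin.natAdd p j))) • b j := by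
  have hsplit := sum_neg_one_pow_mul_omitMinor_smul (joinFamily h a b)
  rw [← Fin.sum_congr' _ h, Fin.sum_univ_add] at hsplit
  simp only [joinFamily_castAdd, joinFamily_natAdd, Fin.val_cast, Fin.val_castAdd,
    Fin.val_natAdd] at hsplit
  rw [gcMeet_eq_sum_left a b h]
  rcases p with _ | p
  · simpa using hsplit.symm
  · have hsign (i : Fin (p + 1)) :
        (-1 : ℂ) ^ (p + 1 - 1 - (i : ℕ)) = (-1) ^ p * (-1) ^ (i : ℕ) :=
      neg_one_pow_sub (by omega)
    have hε : ((-1 : ℂ) ^ p) * (-1) ^ p = 1 := by rw [← mul_pow]; simp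
    simp only [hsign, pow_add, pow_one, mul_assoc, ← smul_smul, ← Finset.smul_sum] at hsplit ⊢
    rw [add_eq_zero_iff_eq_neg] at hsplit
    rw [hsplit, neg_one_smul, smul_neg, smul_neg, smul_neg, neg_neg, smul_smul, hε, one_smul]

theorem gcMeet_mem_inf (h : p + q = k + 1) :
    gcMeet a b ∈ span ℂ (Set.range a) ⊓ span ℂ (Set.range b) := by
  constructor
  · rw [gcMeet_eq_sum_left a b h]
    exact sum_mem fun i _ => smul_mem _ _ (subset_span ⟨i, rfl⟩)
  · rw [gcMeet_eq_sum_right a b h]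
    exact sum_mem fun j _ => smul_mem _ _ (subset_span ⟨j, rfl⟩)

theorem gcMeet_eq_zero_iff (ha : LinearIndependent ℂ a) (hb : LinearIndependent ℂ b) :
    gcMeet a b = 0 ↔ ∀ i, omitMinor (joinFamily h a b) i = 0 := by
  refine ⟨fun h0 => ?_, fun hD => ?_⟩
  · have hsign (n : ℕ) : (-1 : ℂ) ^ n ≠ 0 := pow_ne_zero _ (neg_ne_zero.mpr one_ne_zero)
    have hleft := Fintype.linearIndependent_iff.mp ha _ ((gcMeet_eq_sum_left a b h).symm ▸ h0)
    have hright := Fintype.linearIndependent_iff.mp hb _ ((gcMeet_eq_sum_right a b h).symm ▸ h0)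
    intro i
    obtain ⟨j, rfl⟩ : ∃ j, Fin.cast h j = i := ⟨Fin.cast h.symm i, by simp⟩
    induction j using Fin.addCases with
    | left j => exact (mul_eq_zero.mp (hleft j)).resolve_left (hsign _)
    | right j => exact (mul_eq_zero.mp (hright j)).resolve_left (hsign _)
  · simp [gcMeet_eq_sum_left a b h, hD]

end gcMeet

theorem Submodule.span_singleton_eq_inf_of_finrank_add {K V : Type*} [Field K] [AddCommGroup V]
    [Module K V] [FiniteDimensional K V] {A B : Submodule K V} (hAB : A ⊔ B = ⊤)
    (hdim : Module.finrank K A + Module.finrank K B = Module.finrank K V + 1) {w : V}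
    (hw : w ∈ A ⊓ B) (hw0 : w ≠ 0) : span K {w} = A ⊓ B := by
  refine eq_of_le_of_finrank_eq ((span_singleton_le_iff_mem _ _).mpr hw) ?_
  have := finrank_sup_add_finrank_inf_eq A B
  rw [hAB, finrank_top] at this
  rw [finrank_span_singleton hw0]
  omega

theorem meet_span_property_general
    (k p : ℕ) (hp2 : p ≤ k)
    (a : Fin p → Fin k → ℂ) (b : Fin (k + 1 - p) → Fin k → ℂ)
    (ha : LinearIndependent ℂ a) (hb : LinearIndependent ℂ b) :
    (gcMeet a b ≠ 0 ↔
      Submodule.span ℂ (Set.range a) ⊔ Submodule.span ℂ (Set.range b) = ⊤) ∧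
    (gcMeet a b ≠ 0 →
      Submodule.span ℂ {gcMeet a b}
        = Submodule.span ℂ (Set.range a) ⊓ Submodule.span ℂ (Set.range b)) := by
  have h : p + (k + 1 - p) = k + 1 := by omega
  have hiff : gcMeet a b ≠ 0 ↔ span ℂ (Set.range a) ⊔ span ℂ (Set.range b) = ⊤ := by
    rw [Ne, gcMeet_eq_zero_iff a b h ha hb, ← span_union, ← range_joinFamily h,
      ← exists_omitMinor_ne_zero_iff, not_forall]
  refine ⟨hiff, fun hw => span_singleton_eq_inf_of_finrank_add (hiff.mp hw) ?_
    (gcMeet_mem_inf a b h) hw⟩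
  rw [finrank_span_eq_card ha, finrank_span_eq_card hb, Module.finrank_fin_fun]
  simp only [Fintype.card_fin]
  omega

/-- Span property of the degree-one meet: for linearly independent families
`a` (of size `p`) and `b` (of size `k+1−p`), the meet is nonzero iff
`A + B = ℂ^k`, and in that case it spans `A ∩ B`. -/
theorem meet_span_property
    (k p : ℕ) (hk : 2 ≤ k) (hp1 : 1 ≤ p) (hp2 : p ≤ k)
    (a : Fin p → Fin k → ℂ) (b : Fin (k + 1 - p) → Fin k → ℂ)
    (ha : LinearIndependent ℂ a) (hb : LinearIndependent ℂ b) :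
    (gcMeet a b ≠ 0 ↔
      Submodule.span ℂ (Set.range a) ⊔ Submodule.span ℂ (Set.range b) = ⊤) ∧
    (gcMeet a b ≠ 0 →
      Submodule.span ℂ {gcMeet a b}
        = Submodule.span ℂ (Set.range a) ⊓ Submodule.span ℂ (Set.range b)) :=
  meet_span_property_general k p hp2 a b ha hb

end
end
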